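/- arXiv:1901.07662 — 3 statements merged into one kernel-verified Lean document; each statement's English description precedes it below -/
import Mathlib

section
/- The KT redundancy bound for the binary alphabet: for any sequence l^n with symbol counts a, b (a+b = n, n ≥ 1) and any θ ∈ [0,1], -log KT(l^n) ≤ -log(θ^a (1-θ)^b) + (1/2)·log n + 1, where log is base 2. -/
/-- The sequential Krichevsky–Trofimov probability of a binary sequence, with the most
recent symbol at the head of the list: `KT [] = 1` and
`KT (x :: t) = KT t · (count of x in t + 1/2)/(|t| + 1)`. -/
noncomputable def ktBin : List Bool → ℝ
  | [] => 1
  | x :: t => ktBin t * (((t.count x : ℝ) + 1 / 2) / ((t.length : ℝ) + 1))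

/-- Negative base-2 logarithm with the convention `-log 0 = ∞`, valued in `EReal`. -/
noncomputable def negLog2 (x : ℝ) : EReal :=
  if x = 0 then ⊤ else ((-Real.logb 2 x : ℝ) : EReal)

/-!
The KT probability of a sequence with counts `a, b` (`n = a + b`) is at least
`(a/n)^a (b/n)^b / (2√n)`, and by Gibbs' inequality the maximum-likelihood probability
`(a/n)^a (b/n)^b` dominates `θ^a (1-θ)^b` for every `θ`. The first bound is proved in logarithmic
form by induction on the sequence: appending a symbol seen `c` times multiplies KT by
`(c + 1/2)/(n + 1)`, and the bound changes by at most this factor thanks to the two-sided estimate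
`1 ≤ (x + 1/2) log (1 + 1/x) ≤ 1 + 1/(12 x (x + 1))`, read off the series
`log (1 + 1/x) = 2 ∑ₖ (2x + 1)^-(2k+1) / (2k + 1)`.
-/

open Real

theorem hasSum_mul_log_one_add_inv {x : ℝ} (hx : 0 < x) :
    HasSum (fun k : ℕ => ((1 / (2 * x + 1)) ^ 2) ^ k / (2 * k + 1))
      ((x + 1 / 2) * log (1 + x⁻¹)) := by
  convert! (hasSum_log_one_add_inv hx).mul_left (x + 1 / 2) using 1
  ext k
  rw [← pow_mul, pow_succ]
  field_simp

theorem one_le_mul_log_one_add_inv {x : ℝ} (hx : 0 < x) :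
    1 ≤ (x + 1 / 2) * log (1 + x⁻¹) := by
  simpa using le_hasSum (hasSum_mul_log_one_add_inv hx) 0 fun k _ => by positivity

theorem mul_log_one_add_inv_le {x : ℝ} (hx : 0 < x) :
    (x + 1 / 2) * log (1 + x⁻¹) ≤ 1 + 1 / (12 * x * (x + 1)) := by
  have htail := (hasSum_nat_add_iff' 1).mpr (hasSum_mul_log_one_add_inv hx)
  set r := (1 / (2 * x + 1)) ^ 2 with hr
  have hr1 : r < 1 := by
    rw [hr, div_pow, one_pow, div_lt_one (by positivity)]; nlinarith
  have hgeom := (hasSum_geometric_of_lt_one (by positivity) hr1).mul_left (r / 3)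
  -- compare the tail `∑_{k ≥ 1} r^k / (2k + 1)` with `∑_{k ≥ 1} r^k / 3`
  have hle := hasSum_le (fun k => ?_) htail hgeom
  · have hsum : r / 3 * (1 - r)⁻¹ = 1 / (12 * x * (x + 1)) := by
      have h1r : 1 - r = 4 * x * (x + 1) / (2 * x + 1) ^ 2 := by rw [hr]; field_simp; ring
      rw [h1r, hr]; field_simp; ring
    norm_num at hle
    linarith
  · have h3 : (3 : ℝ) ≤ 2 * (k + 1 : ℕ) + 1 := by push_cast; linarith [k.cast_nonneg (α := ℝ)]
    calc r ^ (k + 1) / (2 * (k + 1 : ℕ) + 1) ≤ r ^ (k + 1) / 3 := by gcongr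
      _ = r / 3 * r ^ k := by ring

theorem log_add_one_sub_log {x : ℝ} (hx : 0 < x) : log (x + 1) - log x = log (1 + x⁻¹) := by
  rw [← log_div (by positivity) hx.ne']
  congr 1
  field_simp

theorem add_one_mul_log_add_one_sub_mul_log_sub_log_le {a : ℝ} (ha : 0 ≤ a) :
    (a + 1) * log (a + 1) - a * log a - log (a + 1 / 2) ≤ 1 := by
  rcases ha.eq_or_lt with rfl | ha
  · norm_num
    rw [one_div, log_inv, neg_neg]
    linarith [log_two_lt_d9]
  have hu : log (a + 1) - log a ≤ (1 + 1 / (12 * a * (a + 1))) / (a + 1 / 2) := by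
    rw [le_div_iff₀ (by positivity), mul_comm, log_add_one_sub_log ha]
    exact mul_log_one_add_inv_le ha
  have hv : log (a + 1) - log (a + 1 / 2) ≤
      (1 + 1 / (12 * (2 * a + 1) * (2 * a + 1 + 1))) / (2 * a + 1 + 1 / 2) := by
    have hhalf : log (a + 1) - log (a + 1 / 2) = log (1 + (2 * a + 1)⁻¹) := by
      rw [← log_div (by positivity) (by positivity)]
      congr 1
      field_simp
      ring
    rw [le_div_iff₀ (by positivity), mul_comm, hhalf]
    exact mul_log_one_add_inv_le (by positivity)
  have hsum : 1 - (a * ((1 + 1 / (12 * a * (a + 1))) / (a + 1 / 2))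
      + (1 + 1 / (12 * (2 * a + 1) * (2 * a + 1 + 1))) / (2 * a + 1 + 1 / 2))
        = (4 * a + 5) / (12 * (a + 1) * (2 * a + 1) * (4 * a + 3)) := by
    field_simp
    ring
  have hpos : 0 ≤ (4 * a + 5) / (12 * (a + 1) * (2 * a + 1) * (4 * a + 3)) := by positivity
  calc (a + 1) * log (a + 1) - a * log a - log (a + 1 / 2)
      = a * (log (a + 1) - log a) + (log (a + 1) - log (a + 1 / 2)) := by ring
    _ ≤ a * ((1 + 1 / (12 * a * (a + 1))) / (a + 1 / 2))
        + (1 + 1 / (12 * (2 * a + 1) * (2 * a + 1 + 1))) / (2 * a + 1 + 1 / 2) := by gcongr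
    _ ≤ 1 := by linarith

/-- `log ((a/n)^a (b/n)^b / (2√n))` with `n = a + b`, using `0 * log 0 = 0`. -/
noncomputable def ktLogBound (a b : ℕ) : ℝ :=
  a * log a + b * log b - (a + b) * log (a + b) - log (a + b) / 2 - log 2

theorem ktLogBound_comm (a b : ℕ) : ktLogBound a b = ktLogBound b a := by
  simp only [ktLogBound, add_comm (a : ℝ)]
  ring

theorem ktLogBound_succ_le {a b : ℕ} (h : 0 < a + b) :
    ktLogBound (a + 1) b ≤ ktLogBound a b + log (a + 1 / 2) - log (a + b + 1) := by
  have hn : (0 : ℝ) < a + b := by exact_mod_cast h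
  have hsucc := add_one_mul_log_add_one_sub_mul_log_sub_log_le (a.cast_nonneg (α := ℝ))
  have hstep := one_le_mul_log_one_add_inv hn
  rw [← log_add_one_sub_log hn] at hstep
  simp only [ktLogBound, Nat.cast_add, Nat.cast_one, add_right_comm (a : ℝ) 1]
  linarith

theorem ktBin_pos (l : List Bool) : 0 < ktBin l := by
  induction l with
  | nil => simp [ktBin]
  | cons x t ih => rw [ktBin]; positivity

theorem ktLogBound_count_eq (l : List Bool) (x : Bool) :
    ktLogBound (l.count true) (l.count false) = ktLogBound (l.count x) (l.count !x) := by
  cases x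
  · exact ktLogBound_comm _ _
  · rfl

theorem log_ktBin_cons (x : Bool) (t : List Bool) :
    log (ktBin (x :: t)) = log (ktBin t) + log (t.count x + 1 / 2) - log (t.length + 1) := by
  rw [ktBin, log_mul (ktBin_pos t).ne' (by positivity), log_div (by positivity) (by positivity)]
  ring

theorem ktLogBound_le_log_ktBin (l : List Bool) (hl : l ≠ []) :
    ktLogBound (l.count true) (l.count false) ≤ log (ktBin l) := by
  induction l with
  | nil => exact absurd rfl hl
  | cons x t ih =>
    rw [ktLogBound_count_eq _ x, List.count_cons_self, List.count_cons_of_ne (by simp),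
      log_ktBin_cons]
    by_cases ht : t = []
    · subst ht
      cases x <;> norm_num [ktLogBound, ktBin] <;> rw [one_div, log_inv]
    have hcount : t.count x + t.count (!x) = t.length :=
      (add_comm _ _).trans (List.count_not_add_count t x)
    have hstep := ktLogBound_succ_le (hcount ▸ List.length_pos_iff.mpr ht)
    have hih := ih ht
    rw [ktLogBound_count_eq _ x] at hih
    rw [← hcount]
    push_cast
    linarith

theorem natCast_mul_log_le {θ n : ℝ} (a : ℕ) (hθ : 0 ≤ θ) (hn : 0 < n) (ha : θ ^ a ≠ 0) :
    a * log θ ≤ a * log a - a * log n + (θ * n - a) := by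
  rcases a.eq_zero_or_pos with rfl | ha0
  · simp only [Nat.cast_zero, zero_mul, sub_zero, zero_add]; positivity
  have hθ0 : 0 < θ := hθ.lt_of_ne (fun h => ha (by rw [← h, zero_pow ha0.ne']))
  have ha0' : (0 : ℝ) < a := by exact_mod_cast ha0
  have h := log_le_sub_one_of_pos (x := θ * n / a) (by positivity)
  rw [log_div (by positivity) ha0'.ne', log_mul hθ0.ne' hn.ne'] at h
  have hmul := mul_le_mul_of_nonneg_left h ha0'.le
  rw [show (a : ℝ) * (θ * n / a - 1) = θ * n - a by field_simp] at hmul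
  linarith

theorem log_pow_mul_one_sub_pow_le {θ : ℝ} (hθ : θ ∈ Set.Icc 0 1) {a b : ℕ} (hab : 0 < a + b)
    (h : θ ^ a * (1 - θ) ^ b ≠ 0) :
    log (θ ^ a * (1 - θ) ^ b) ≤ a * log a + b * log b - (a + b) * log (a + b) := by
  have hn : (0 : ℝ) < a + b := by exact_mod_cast hab
  have hθa := natCast_mul_log_le a hθ.1 hn (left_ne_zero_of_mul h)
  have hθb := natCast_mul_log_le b (sub_nonneg.2 hθ.2) hn (right_ne_zero_of_mul h)
  rw [log_mul (left_ne_zero_of_mul h) (right_ne_zero_of_mul h), log_pow, log_pow]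
  linarith

theorem negLog2_le_add {x y c : ℝ} (hx : x ≠ 0) (h : y ≠ 0 → log y ≤ log x + c * log 2) :
    negLog2 x ≤ negLog2 y + c := by
  by_cases hy : y = 0
  · simp [negLog2, hy]
  have hlog2 := log_pos one_lt_two
  have hdiv : log y / log 2 ≤ log x / log 2 + c := by
    rw [div_le_iff₀ hlog2, add_mul, div_mul_cancel₀ _ hlog2.ne']
    exact h hy
  rw [negLog2, negLog2, if_neg hx, if_neg hy, ← EReal.coe_add, EReal.coe_le_coe_iff, logb, logb]
  linarith

/-- KT redundancy bound for the binary alphabet: for any binary sequence of length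
`n ≥ 1` with symbol counts `a, b` and any `θ ∈ [0,1]`,
`-log KT(l^n) ≤ -log(θ^a (1-θ)^b) + (1/2)·log n + 1` (logs base 2, `-log 0 = ∞`). -/
theorem ktBin_redundancy (l : List Bool) (hn : 1 ≤ l.length)
    (θ : ℝ) (hθ : θ ∈ Set.Icc (0 : ℝ) 1) :
    negLog2 (ktBin l) ≤
      negLog2 (θ ^ l.count true * (1 - θ) ^ l.count false) +
        ((1 / 2 * Real.logb 2 l.length + 1 : ℝ) : EReal) := by
  have hlen : (l.count true : ℝ) + l.count false = l.length := by
    exact_mod_cast List.count_true_add_count_false l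
  refine negLog2_le_add (ktBin_pos l).ne' fun hp => ?_
  have hml := log_pow_mul_one_sub_pow_le hθ (by rwa [List.count_true_add_count_false]) hp
  have hkt := ktLogBound_le_log_ktBin l (List.ne_nil_of_length_pos hn)
  rw [ktLogBound, hlen] at hkt
  rw [hlen] at hml
  have hlogb : logb 2 l.length * log 2 = log l.length :=
    div_mul_cancel₀ _ (log_pos one_lt_two).ne'
  linarith
end

section
/- Switch lower-bounds each component up to a log factor: for the CTS-style distribution at a single node, defined as a sum over model index sequences weighted by the switch prior with α_m = 1/m, the probability assigned to any sequence l^n satisfies CTS(l^n) ≥ (1/(2n))·max(φ_a(l^n), φ_b(l^n)), where φ_a(l^n) = ∏_k φ_a(l_k | l^{k-1}) and φ_b similarly; hence -log CTS(l^n) ≤ min(-log φ_a(l^n), -log φ_b(l^n)) + log(2n). -/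
/-- The switch prior on model-index sequences over `{a,b}` (encoded as `Bool`,
`true` = model `a`), with the most recent index at the head of the list:
`w [] = 1`, `w [i] = 1/2`, and for length `m > 1` the multiplicative factor is
`1 - 1/m` for staying and `1/m` for switching. -/
noncomputable def switchW : List Bool → ℝ
  | [] => 1
  | [_] => 1 / 2
  | i :: j :: t =>
      (if i = j then 1 - 1 / ((t.length + 2 : ℕ) : ℝ)
       else 1 / ((t.length + 2 : ℕ) : ℝ)) * switchW (j :: t)

/-- The probability a sequential predictor `φ` (mapping a past `l^{k-1}` and a symbol to
a conditional probability) assigns to a whole sequence: `∏_k φ(l_k | l^{k-1})`. -/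
noncomputable def seqProd {Λ : Type*} (φ : List Λ → Λ → ℝ) (l : List Λ) : ℝ :=
  ∏ k : Fin l.length, φ (l.take k) (l.get k)

/-- The single-node CTS-style distribution: a sum over model-index sequences weighted by
the switch prior, each term being the product of the chosen model's conditional
probabilities. -/
noncomputable def cts {Λ : Type*} (φa φb : List Λ → Λ → ℝ) (l : List Λ) : ℝ :=
  ∑ f : Fin l.length → Bool,
    switchW (List.ofFn f).reverse *
      ∏ k : Fin l.length, (if f k then φa else φb) (l.take k) (l.get k)

lemma switchW_nonneg : ∀ l, 0 ≤ switchW l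
  | [] => by simp [switchW]
  | [i] => by norm_num [switchW]
  | i :: j :: t => by
      rw [switchW]
      apply mul_nonneg
      · have hx : (1:ℝ) ≤ ((t.length + 2 : ℕ) : ℝ) := by push_cast; linarith [Nat.cast_nonneg (α := ℝ) t.length]
        have hx0 : (0:ℝ) < ((t.length + 2 : ℕ) : ℝ) := by linarith
        split
        · have : 1 / ((t.length + 2 : ℕ) : ℝ) ≤ 1 := by
            rw [div_le_one hx0]; exact hx
          linarith
        · positivity
      · exact switchW_nonneg (j :: t)

lemma switchW_replicate (c : Bool) : ∀ n : ℕ, switchW (List.replicate (n + 1) c) = 1 / (2 * (n + 1)) := by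
  intro n
  induction n with
  | zero => norm_num [switchW]
  | succ m ih =>
      have h2 : List.replicate (m + 2) c = c :: c :: List.replicate m c := rfl
      have h1 : c :: List.replicate m c = List.replicate (m + 1) c := rfl
      rw [h2, switchW, if_pos rfl, List.length_replicate, h1, ih]
      have hm1 : ((m:ℝ) + 1) ≠ 0 := by positivity
      have hm2 : ((m:ℝ) + 2) ≠ 0 := by positivity
      push_cast
      field_simp
      ring

lemma cts_term_le {Λ : Type*} (φa φb : List Λ → Λ → ℝ)
    (hφa : ∀ s x, 0 < φa s x) (hφb : ∀ s x, 0 < φb s x)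
    (l : List Λ) (g : Fin l.length → Bool) :
    switchW (List.ofFn g).reverse *
      ∏ k : Fin l.length, (if g k then φa else φb) (l.take k) (l.get k) ≤ cts φa φb l := by
  apply Finset.single_le_sum (f := fun f : Fin l.length → Bool =>
    switchW (List.ofFn f).reverse *
      ∏ k : Fin l.length, (if f k then φa else φb) (l.take k) (l.get k))
    (fun f _ => ?_) (Finset.mem_univ g)
  apply mul_nonneg (switchW_nonneg _)
  apply Finset.prod_nonneg
  intro k _
  by_cases h : f k <;> simp [h] <;> [exact (hφa _ _).le; exact (hφb _ _).le]

lemma cts_const_term {Λ : Type*} (φa φb : List Λ → Λ → ℝ)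
    (l : List Λ) (hl : 1 ≤ l.length) (c : Bool) :
    switchW (List.ofFn (fun _ : Fin l.length => c)).reverse *
      ∏ k : Fin l.length, (if c then φa else φb) (l.take k) (l.get k)
      = 1 / (2 * (l.length : ℝ)) * seqProd (if c then φa else φb) l := by
  obtain ⟨m, hm⟩ := Nat.exists_eq_succ_of_ne_zero (by omega : l.length ≠ 0)
  have hw : switchW (List.replicate l.length c) = 1 / (2 * (l.length : ℝ)) := by
    rw [hm, switchW_replicate]; push_cast; ring_nf
  rw [List.ofFn_const, List.reverse_replicate, hw]
  rfl

/-- Switch lower-bounds each component up to a log factor: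
`CTS(l^n) ≥ (1/(2n))·max(φ_a(l^n), φ_b(l^n))`, hence
`-log CTS(l^n) ≤ min(-log φ_a(l^n), -log φ_b(l^n)) + log(2n)` (logs base 2). -/
theorem cts_lower_bound {Λ : Type*} (φa φb : List Λ → Λ → ℝ)
    (hφa : ∀ s x, 0 < φa s x) (hφb : ∀ s x, 0 < φb s x)
    (l : List Λ) (hl : 1 ≤ l.length) :
    1 / (2 * (l.length : ℝ)) * max (seqProd φa l) (seqProd φb l) ≤ cts φa φb l ∧
    -Real.logb 2 (cts φa φb l) ≤
      min (-Real.logb 2 (seqProd φa l)) (-Real.logb 2 (seqProd φb l)) +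
        Real.logb 2 (2 * (l.length : ℝ)) := by
  have hn : (0:ℝ) < 2 * (l.length : ℝ) := by
    have : (1:ℝ) ≤ (l.length : ℝ) := by exact_mod_cast hl
    linarith
  have hc : (0:ℝ) < 1 / (2 * (l.length : ℝ)) := by positivity
  have ha : 1 / (2 * (l.length : ℝ)) * seqProd φa l ≤ cts φa φb l := by
    have := cts_term_le φa φb hφa hφb l (fun _ => true)
    rwa [cts_const_term φa φb l hl true] at this
  have hb : 1 / (2 * (l.length : ℝ)) * seqProd φb l ≤ cts φa φb l := by
    have := cts_term_le φa φb hφa hφb l (fun _ => false)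
    rwa [cts_const_term φa φb l hl false] at this
  have hA : 0 < seqProd φa l := Finset.prod_pos (fun k _ => hφa _ _)
  have hB : 0 < seqProd φb l := Finset.prod_pos (fun k _ => hφb _ _)
  have hmax : 1 / (2 * (l.length : ℝ)) * max (seqProd φa l) (seqProd φb l) ≤ cts φa φb l := by
    rcases max_cases (seqProd φa l) (seqProd φb l) with ⟨h, _⟩ | ⟨h, _⟩ <;> rw [h]
    · exact ha
    · exact hb
  refine ⟨hmax, ?_⟩
  have hcts : 0 < cts φa φb l := lt_of_lt_of_le (by positivity) ha
  have key : ∀ A : ℝ, 0 < A → A * (1 / (2 * (l.length : ℝ))) ≤ cts φa φb l →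
      -Real.logb 2 (cts φa φb l) ≤ -Real.logb 2 A + Real.logb 2 (2 * (l.length : ℝ)) := by
    intro A hA0 hAle
    have h1 : Real.logb 2 (A * (1 / (2 * (l.length : ℝ)))) ≤ Real.logb 2 (cts φa φb l) :=
      Real.logb_le_logb_of_le (by norm_num) (by positivity) hAle
    rw [Real.logb_mul (ne_of_gt hA0) (by positivity), one_div, Real.logb_inv] at h1
    linarith
  rw [← min_add_add_right]
  exact le_min (key _ hA (by rw [mul_comm]; exact ha)) (key _ hB (by rw [mul_comm]; exact hb))
end

section
/- Context Tree Weighting dominance: if at each node of a finite binary context tree the CTW distribution is defined by CTW_node = (1/2)·KT_node + (1/2)·CTW_left·CTW_right (with CTW = KT at leaves), then for any pruning A of the tree (a partition given by an antichain of nodes) with Γ_A tree nodes, CTW_root(l^n) ≥ 2^{-Γ_A}·∏_{leaf cells C ∈ A} KT_C(l^n restricted to C). -/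
/-- A finite binary context tree; each node carries the subsequence of symbols falling
in its cell (the data of an internal node is split between its two children). -/
inductive CTree (Λ : Type*) where
  | leaf : List Λ → CTree Λ
  | node : List Λ → CTree Λ → CTree Λ → CTree Λ

/-- The data (subsequence) at the root of a context tree. -/
def CTree.data {Λ : Type*} : CTree Λ → List Λ
  | .leaf l => l
  | .node l _ _ => l

/-- The Context Tree Weighting distribution: `CTW = KT` at leaves and
`CTW_node = (1/2)·KT_node + (1/2)·CTW_left·CTW_right` at internal nodes. -/
noncomputable def ctw {Λ : Type*} (KT : List Λ → ℝ) : CTree Λ → ℝ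
  | .leaf l => KT l
  | .node l tl tr => 1 / 2 * KT l + 1 / 2 * ctw KT tl * ctw KT tr

/-- `PrunedProd KT t Γ p` holds when some pruning `A` of the tree `t` (an antichain of
nodes forming a partition) spans `Γ` tree nodes and the product of the KT probabilities
of the subsequences at the pruning's leaf cells is `p`. -/
inductive PrunedProd {Λ : Type*} (KT : List Λ → ℝ) : CTree Λ → ℕ → ℝ → Prop
  | here (t : CTree Λ) : PrunedProd KT t 1 (KT t.data)
  | deeper (l : List Λ) (tl tr : CTree Λ) (Γl Γr : ℕ) (pl pr : ℝ) :
      PrunedProd KT tl Γl pl → PrunedProd KT tr Γr pr →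
      PrunedProd KT (.node l tl tr) (1 + Γl + Γr) (pl * pr)

lemma ctw_nonneg {Λ : Type*} (KT : List Λ → ℝ) (hKT : ∀ l, 0 ≤ KT l) :
    ∀ t : CTree Λ, 0 ≤ ctw KT t
  | .leaf l => hKT l
  | .node l tl tr => by
    have h1 := ctw_nonneg KT hKT tl
    have h2 := ctw_nonneg KT hKT tr
    have := hKT l
    simp only [ctw]; positivity

lemma prunedProd_nonneg {Λ : Type*} (KT : List Λ → ℝ) (hKT : ∀ l, 0 ≤ KT l)
    {t : CTree Λ} {Γ : ℕ} {p : ℝ} (h : PrunedProd KT t Γ p) : 0 ≤ p := by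
  induction h with
  | here t => exact hKT _
  | deeper _ _ _ _ _ _ _ _ _ ih1 ih2 => exact mul_nonneg ih1 ih2

/-- CTW dominance: for any pruning `A` of a finite binary context tree with `Γ_A` tree
nodes, `CTW_root(l^n) ≥ 2^{-Γ_A} · ∏_{cells C ∈ A} KT_C(l^n restricted to C)`. -/
theorem ctw_dominance {Λ : Type*} (KT : List Λ → ℝ) (hKT : ∀ l, 0 ≤ KT l)
    (t : CTree Λ) (Γ : ℕ) (p : ℝ) (hA : PrunedProd KT t Γ p) :
    ((2 : ℝ) ^ Γ)⁻¹ * p ≤ ctw KT t := by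
  induction hA with
  | here t =>
    cases t with
    | leaf l =>
      simp only [ctw, CTree.data, pow_one]
      nlinarith [hKT l]
    | node l tl tr =>
      have h1 := ctw_nonneg KT hKT tl
      have h2 := ctw_nonneg KT hKT tr
      simp only [ctw, CTree.data, pow_one]
      nlinarith [hKT l]
  | deeper l tl tr Γl Γr pl pr hl hr ihl ihr =>
    have h1 := ctw_nonneg KT hKT tl
    have h2 := ctw_nonneg KT hKT tr
    have hpl : 0 ≤ pl := prunedProd_nonneg KT hKT hl
    have hpr : 0 ≤ pr := prunedProd_nonneg KT hKT hr
    have key : ((2:ℝ)^Γl)⁻¹ * pl * (((2:ℝ)^Γr)⁻¹ * pr) ≤ ctw KT tl * ctw KT tr :=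
      mul_le_mul ihl ihr (by positivity) h1
    simp only [ctw, pow_add, pow_one]
    have h2pos : (0:ℝ) < 2 ^ Γl := by positivity
    have h3pos : (0:ℝ) < 2 ^ Γr := by positivity
    have := hKT l
    rw [mul_inv, mul_inv]
    nlinarith [key]
end
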